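/- arXiv:2102.04325 — 8 statements merged into one kernel-verified Lean document; each statement's English description precedes it below -/
import Mathlib

section
/- Let e = (e_1,...,e_k) be a sequence of edges with probabilities p_{e_i} ∈ [0,1] and weights w_{e_i} ≥ 0, and let e^r be the rearrangement of e in non-increasing order of the weights w_{e_i}. Then val(e^r) ≥ val(e), where val(e) := Σ_{i=1}^{k} p_{e_i} w_{e_i} ∏_{j<i}(1 - p_{e_j}). -/
/-!
Peeling off the first edge gives `val(e :: l) = p w + (1 - p) val(l)`, so `val` is monotone in the
tail, and swapping two adjacent edges `a, b` changes `val` by `p_a p_b (w_b - w_a)` times the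
survival probability of the prefix. Hence the heaviest edge can be bubbled to the front without
decreasing `val`, and induction on the sorted list finishes the argument.
-/

/-- `val p w = Σ_i p_i w_i ∏_{j<i} (1 - p_j)`: the expected weight of the first active
edge when edges are probed in index order. -/
noncomputable def probeVal (k : ℕ) (p w : Fin k → ℝ) : ℝ :=
  ∑ i, p i * w i * ∏ j ∈ Finset.Iio i, (1 - p j)

open Finset

theorem Fin.prod_Iio_succ {M : Type*} [CommMonoid M] {n : ℕ} (f : Fin (n + 1) → M) (i : Fin n) :
    ∏ j ∈ Iio i.succ, f j = f 0 * ∏ j ∈ Iio i, f j.succ := by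
  have hIio : Iio i.succ = insert 0 ((Iio i).map (Fin.succEmb n)) := by
    rw [Fin.map_succEmb_Iio, Ioo_insert_left i.succ_pos]
    rfl
  rw [hIio, prod_insert (by simp), prod_map]
  rfl

theorem probeVal_succ (n : ℕ) (p w : Fin (n + 1) → ℝ) :
    probeVal (n + 1) p w
      = p 0 * w 0 + (1 - p 0) * probeVal n (p ∘ Fin.succ) (w ∘ Fin.succ) := by
  simp only [probeVal, Fin.sum_univ_succ, Fin.prod_Iio_succ, mul_sum, Function.comp_apply]
  congr 1
  · rw [← bot_eq_zero, Iio_bot, prod_empty, mul_one]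
  · exact sum_congr rfl fun _ _ => by ring

noncomputable def listProbeVal : List (ℝ × ℝ) → ℝ
  | [] => 0
  | e :: l => e.1 * e.2 + (1 - e.1) * listProbeVal l

theorem probeVal_eq_listProbeVal (k : ℕ) (p w : Fin k → ℝ) :
    probeVal k p w = listProbeVal (List.ofFn fun i => (p i, w i)) := by
  induction k with
  | zero => simp [probeVal, listProbeVal]
  | succ n ih => rw [probeVal_succ, List.ofFn_succ, listProbeVal, ih]; rfl

theorem listProbeVal_cons_mono {e : ℝ × ℝ} {l l' : List (ℝ × ℝ)} (he : e.1 ≤ 1)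
    (h : listProbeVal l ≤ listProbeVal l') : listProbeVal (e :: l) ≤ listProbeVal (e :: l') := by
  simp only [listProbeVal]
  gcongr

theorem listProbeVal_swap {a b : ℝ × ℝ} (l : List (ℝ × ℝ)) (ha : 0 ≤ a.1) (hb : 0 ≤ b.1)
    (hw : a.2 ≤ b.2) : listProbeVal (a :: b :: l) ≤ listProbeVal (b :: a :: l) := by
  have hdiff :
      listProbeVal (b :: a :: l) - listProbeVal (a :: b :: l) = a.1 * b.1 * (b.2 - a.2) := by
    simp only [listProbeVal]
    ring
  linarith [mul_nonneg (mul_nonneg ha hb) (sub_nonneg.2 hw)]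

theorem listProbeVal_append_cons_le {u : List (ℝ × ℝ)} {b : ℝ × ℝ} (v : List (ℝ × ℝ))
    (hp : ∀ a ∈ u, a.1 ∈ Set.Icc (0 : ℝ) 1) (hw : ∀ a ∈ u, a.2 ≤ b.2) (hb : 0 ≤ b.1) :
    listProbeVal (u ++ b :: v) ≤ listProbeVal (b :: (u ++ v)) := by
  induction u with
  | nil => rfl
  | cons a u ih =>
    have ha := hp a List.mem_cons_self
    have hbubble := ih (fun x hx => hp x (List.mem_cons_of_mem a hx))
      (fun x hx => hw x (List.mem_cons_of_mem a hx))
    exact (listProbeVal_cons_mono ha.2 hbubble).trans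
      (listProbeVal_swap _ ha.1 hb (hw a List.mem_cons_self))

theorem listProbeVal_le_of_perm_of_pairwise {l₁ l₂ : List (ℝ × ℝ)} (hperm : l₁.Perm l₂)
    (hsorted : l₂.Pairwise fun x y => y.2 ≤ x.2) (hp : ∀ x ∈ l₁, x.1 ∈ Set.Icc (0 : ℝ) 1) :
    listProbeVal l₁ ≤ listProbeVal l₂ := by
  induction l₂ generalizing l₁ with
  | nil => rw [List.perm_nil.1 hperm]
  | cons b t ih =>
    obtain ⟨u, v, rfl⟩ := List.append_of_mem (hperm.mem_iff.2 List.mem_cons_self)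
    have hb := hp b (by simp)
    have hperm' : (u ++ v).Perm t := (List.perm_middle.symm.trans hperm).cons_inv
    have hsub : u ++ v ⊆ u ++ b :: v := ((List.sublist_cons_self b v).append_left u).subset
    calc listProbeVal (u ++ b :: v)
        ≤ listProbeVal (b :: (u ++ v)) :=
          listProbeVal_append_cons_le v (fun a ha => hp a (hsub (List.mem_append_left v ha)))
            (fun a ha => List.rel_of_pairwise_cons hsorted
              (hperm'.subset (List.mem_append_left v ha))) hb.1
      _ ≤ listProbeVal (b :: t) :=
          listProbeVal_cons_mono hb.2 (ih hperm' hsorted.of_cons fun x hx => hp x (hsub hx))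

theorem probeVal_le_of_sorted_rearrangement_general
    (k : ℕ) (p w : Fin k → ℝ)
    (hp : ∀ i, p i ∈ Set.Icc (0 : ℝ) 1)
    (σ : Equiv.Perm (Fin k)) (hσ : Antitone fun i => w (σ i)) :
    probeVal k p w ≤ probeVal k (p ∘ σ) (w ∘ σ) := by
  rw [probeVal_eq_listProbeVal, probeVal_eq_listProbeVal]
  exact listProbeVal_le_of_perm_of_pairwise
    (Equiv.Perm.ofFn_comp_perm σ fun i => (p i, w i)).symm
    (List.pairwise_ofFn.2 fun _ _ hij => hσ hij.le)
    (List.forall_mem_ofFn_iff.2 hp)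

/-- rearranging a tuple of edges in non-increasing order of the weights
does not decrease `val`. -/
theorem probeVal_le_of_sorted_rearrangement
    (k : ℕ) (p w : Fin k → ℝ)
    (hp : ∀ i, p i ∈ Set.Icc (0 : ℝ) 1) (hw : ∀ i, 0 ≤ w i)
    (σ : Equiv.Perm (Fin k)) (hσ : Antitone fun i => w (σ i)) :
    probeVal k p w ≤ probeVal k (p ∘ σ) (w ∘ σ) :=
  probeVal_le_of_sorted_rearrangement_general k p w hp σ hσ
end

section
/- Consider the rank-one online contention resolution scheme on ground set [k]: elements arrive in an arbitrary fixed order σ(1),...,σ(k); each element i is independently active with probability z_i, where Σ_i z_i ≤ 1; upon the arrival of an active element σ(t), the scheme selects it (and halts) independently with probability q_t = 1/(2 - Σ_{i=1}^{t-1} z_{σ(i)}). Then for every element i and every arrival order σ, the probability that i is selected, conditioned on i being active, is at least 1/2. -/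
/-!
Element `i` is selected exactly when its arrival step `t₀ = σ⁻¹ i` is the first step whose
element is active with a heads coin. By independence this has probability
`z i * q t₀ * ∏ s < t₀, (1 - z (σ s) * q s)`. Writing `S t = ∑ s < t, z (σ s)`, each factor
`1 - z (σ s) / (2 - S s)` equals `(2 - S (s + 1)) / (2 - S s)`, so the product telescopes to
`(2 - S t₀) / 2` and the probability is exactly `z i / 2`; the budget `∑ z ≤ 1` keeps every
denominator `2 - S s` at least `1`.
-/

open Finset

theorem sum_prod_mul_ite_first_success {ι α R : Type*} [Fintype ι] [LinearOrder ι]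
    [LocallyFiniteOrderBot ι] [Fintype α] [CommRing R] (w : ι → α → R)
    (hw : ∀ t, ∑ a, w t a = 1) (S : ι → α → Prop) [∀ t, DecidablePred (S t)] (t₀ : ι) :
    ∑ x : ι → α, (∏ t, w t (x t)) * (if S t₀ (x t₀) ∧ ∀ s < t₀, ¬ S s (x s) then 1 else 0)
      = (∑ a with S t₀ a, w t₀ a) * ∏ s ∈ Iio t₀, (1 - ∑ a with S s a, w s a) := by
  set E : ι → α → R := fun t a => if (t = t₀ → S t a) ∧ (t < t₀ → ¬ S t a) then 1 else 0
  have hE : ∀ x : ι → α, (if S t₀ (x t₀) ∧ ∀ s < t₀, ¬ S s (x s) then (1 : R) else 0)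
      = ∏ t, E t (x t) := by
    intro x
    rw [prod_boole]
    congr 1
    simp only [mem_univ, true_implies, forall_and, forall_eq]
  have hstep : ∀ t, ∑ a, w t a * E t a
      = (if t = t₀ then ∑ a with S t₀ a, w t₀ a else 1) *
        (if t < t₀ then 1 - ∑ a with S t a, w t a else 1) := by
    intro t
    rcases lt_trichotomy t t₀ with hlt | heq | hgt
    · have hsplit := sum_filter_add_sum_filter_not univ (S t) (w t)
      simp only [E, hlt, hlt.ne, false_implies, true_implies, true_and, mul_boole, ← sum_filter,
        if_true, if_false, one_mul, hw] at hsplit ⊢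
      exact eq_sub_of_add_eq' hsplit
    · subst heq
      simp only [E, lt_self_iff_false, false_implies, true_implies, and_true, mul_boole,
        ← sum_filter, if_true, if_false, mul_one]
    · simp only [E, hgt.ne', hgt.not_gt, false_implies, and_self, if_true, if_false, mul_one, hw]
  simp_rw [hE, ← prod_mul_distrib]
  rw [← Fintype.prod_sum (κ := fun _ => α) (fun t a => w t a * E t a)]
  simp_rw [hstep, prod_mul_distrib]
  rw [prod_ite_eq', ← prod_filter, filter_gt_eq_Iio, if_pos (mem_univ _)]

theorem exists_Iio_eq_insert_Iio {ι : Type*} [LinearOrder ι] [LocallyFiniteOrderBot ι] {t : ι}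
    (h : (Iio t).Nonempty) : ∃ m < t, Iio t = insert m (Iio m) := by
  refine ⟨(Iio t).max' h, mem_Iio.1 (max'_mem _ h), ?_⟩
  rw [Iio_insert]
  ext s
  simp only [mem_Iio, mem_Iic]
  exact ⟨fun hs => le_max' _ s (mem_Iio.2 hs), fun hs => hs.trans_lt (mem_Iio.1 (max'_mem _ h))⟩

theorem prod_Iio_one_sub_div_sub_sum_Iio {ι K : Type*} [LinearOrder ι] [LocallyFiniteOrderBot ι]
    [Field K] (g : ι → K) {c : K} (hc : c ≠ 0) (t : ι) (h : ∀ s < t, ∑ j ∈ Iio s, g j ≠ c) :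
    ∏ s ∈ Iio t, (1 - g s / (c - ∑ j ∈ Iio s, g j)) = (c - ∑ s ∈ Iio t, g s) / c := by
  induction hn : #(Iio t) using Nat.strong_induction_on generalizing t with
  | _ n ih =>
    rcases (Iio t).eq_empty_or_nonempty with hempty | hne
    · simp [hempty, hc]
    obtain ⟨m, hm, hIio⟩ := exists_Iio_eq_insert_Iio hne
    have hmc : c - ∑ j ∈ Iio m, g j ≠ 0 := sub_ne_zero.2 (h m hm).symm
    have hcard : #(Iio m) < n := by
      rw [← hn, hIio, card_insert_of_notMem notMem_Iio_self]
      exact Nat.lt_succ_self _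
    rw [hIio, prod_insert notMem_Iio_self, sum_insert notMem_Iio_self,
      ih _ hcard m (fun s hs => h s (hs.trans hm)) rfl]
    field_simp
    ring

theorem sum_prod_arrow_comp_perm {ι α β M : Type*} [Fintype ι] [DecidableEq ι] [Fintype α]
    [Fintype β] [AddCommMonoid M] (σ : Equiv.Perm ι) (Φ : (ι → α × β) → M) :
    ∑ ω : (ι → α) × (ι → β), Φ (fun t => (ω.1 (σ t), ω.2 t)) = ∑ x, Φ x :=
  Fintype.sum_equiv ((Equiv.prodCongr (Equiv.arrowCongr σ.symm (Equiv.refl α)) (Equiv.refl _)).trans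
    (Equiv.arrowProdEquivProdArrow ι (fun _ => α) (fun _ => β)).symm) _ _ fun _ => rfl

theorem sum_selected_eq_mul_prod_Iio {k : ℕ} {R : Type*} [CommRing R] (p q : Fin k → R)
    (σ : Equiv.Perm (Fin k)) (i : Fin k) :
    ∑ ω : (Fin k → Bool) × (Fin k → Bool),
        ((∏ j, if ω.1 j then p j else 1 - p j) * ∏ t, if ω.2 t then q t else 1 - q t) *
        (if ∃ t, σ t = i ∧ ω.1 i = true ∧ ω.2 t = true ∧
              ∀ s < t, ¬(ω.1 (σ s) = true ∧ ω.2 s = true)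
          then 1 else 0)
      = p i * q (σ.symm i) * ∏ s ∈ Iio (σ.symm i), (1 - p (σ s) * q s) := by
  set t₀ := σ.symm i
  set w : Fin k → Bool × Bool → R := fun t a =>
    (if a.1 then p (σ t) else 1 - p (σ t)) * (if a.2 then q t else 1 - q t)
  have hw : ∀ t, ∑ a, w t a = 1 := fun t => by
    simp only [w, Fintype.sum_prod_type, Fintype.sum_bool, Bool.false_eq_true, ↓reduceIte]
    ring
  set S : Bool × Bool → Prop := fun a => a.1 = true ∧ a.2 = true
  have hsel : ∀ t, ∑ a with S a, w t a = p (σ t) * q t := fun t => by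
    simp [S, w, sum_filter, Fintype.sum_prod_type]
  have hweight : ∀ ω : (Fin k → Bool) × (Fin k → Bool), ∏ t, w t (ω.1 (σ t), ω.2 t)
      = (∏ j, if ω.1 j then p j else 1 - p j) * ∏ t, if ω.2 t then q t else 1 - q t := fun ω => by
    rw [← Equiv.prod_comp σ (fun j => if ω.1 j then p j else 1 - p j), ← prod_mul_distrib]
  have hevent : ∀ ω : (Fin k → Bool) × (Fin k → Bool),
      (S (ω.1 (σ t₀), ω.2 t₀) ∧ ∀ s < t₀, ¬ S (ω.1 (σ s), ω.2 s)) ↔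
      ∃ t, σ t = i ∧ ω.1 i = true ∧ ω.2 t = true ∧ ∀ s < t, ¬(ω.1 (σ s) = true ∧ ω.2 s = true) :=
    fun ω => by
      simp only [S, t₀, ← Equiv.eq_symm_apply, exists_eq_left, Equiv.apply_symm_apply, and_assoc]
  calc _ = ∑ ω : (Fin k → Bool) × (Fin k → Bool), (∏ t, w t (ω.1 (σ t), ω.2 t)) *
          if S (ω.1 (σ t₀), ω.2 t₀) ∧ ∀ s < t₀, ¬ S (ω.1 (σ s), ω.2 s) then 1 else 0 := by
        refine sum_congr rfl fun ω _ => ?_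
        rw [hweight]
        congr 1
        simp only [hevent]
    _ = _ := sum_prod_arrow_comp_perm σ (fun x => (∏ t, w t (x t)) *
          if S (x t₀) ∧ ∀ s < t₀, ¬ S (x s) then 1 else 0)
    _ = (∑ a with S a, w t₀ a) * ∏ s ∈ Iio t₀, (1 - ∑ a with S a, w s a) :=
        -- only the `Decidable` instances of the two indicators differ
        by convert sum_prod_mul_ite_first_success w hw (fun _ => S) t₀
    _ = _ := by simp only [hsel, t₀, σ.apply_symm_apply]

/-- 1/2-selectability of the Ezra et al. rank-one OCRS.  The sample space
consists of pairs `ω = (A, Cn)` where `A j` indicates element `j` is active (probability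
`z j`, independently) and `Cn t` indicates the scheme's internal coin at arrival step `t`
comes up heads (probability `q_t = 1/(2 - Σ_{s<t} z_{σ(s)})`, independently).  Element `i`
is selected iff at its arrival step `t` (so `σ t = i`) it is active, its coin is heads,
and no earlier-arriving element was both active with a heads coin.  The probability that
`i` is selected is at least `z i / 2`, i.e. at least `1/2` conditioned on `i` active. -/
theorem ocrs_half_selectable
    (k : ℕ) (z : Fin k → ℝ)
    (hz : ∀ j, z j ∈ Set.Icc (0 : ℝ) 1) (hsum : ∑ j, z j ≤ 1)
    (σ : Equiv.Perm (Fin k)) (i : Fin k) :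
    z i / 2 ≤
      ∑ ω : (Fin k → Bool) × (Fin k → Bool),
        ((∏ j, if ω.1 j then z j else 1 - z j) *
          ∏ t, if ω.2 t then 1 / (2 - ∑ s ∈ Finset.Iio t, z (σ s))
                else 1 - 1 / (2 - ∑ s ∈ Finset.Iio t, z (σ s))) *
        (if ∃ t, σ t = i ∧ ω.1 i = true ∧ ω.2 t = true ∧
              ∀ s < t, ¬(ω.1 (σ s) = true ∧ ω.2 s = true)
          then 1 else 0) := by
  have hbudget : ∀ t, ∑ s ∈ Iio t, z (σ s) ≠ 2 := fun t =>
    ((sum_le_univ_sum_of_nonneg fun s => (hz (σ s)).1).trans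
      ((Equiv.sum_comp σ z).le.trans hsum) |>.trans_lt one_lt_two).ne
  rw [sum_selected_eq_mul_prod_Iio z (fun t => 1 / (2 - ∑ s ∈ Iio t, z (σ s))) σ i]
  set t₀ := σ.symm i
  have htel := prod_Iio_one_sub_div_sub_sum_Iio (fun s => z (σ s)) two_ne_zero t₀
    fun s _ => hbudget s
  have h₀ : 2 - ∑ s ∈ Iio t₀, z (σ s) ≠ 0 := sub_ne_zero.2 (hbudget t₀).symm
  simp only [mul_one_div, htel]
  field_simp
  exact le_rfl
end

section
/- Let z_1,...,z_k ∈ [0,1] with Σ_i z_i ≤ 1. In the random-order contention resolution scheme of Lee and Singla, each element i draws Y_i uniformly at random from [0,1] independently; elements are processed in increasing order of Y_i; each element i is independently active with probability z_i; the first active element i reached is selected independently with probability exp(-Y_i z_i), and if not selected, processing continues. Then for every element i, the probability that i is selected, conditioned on i being active, is at least 1 - 1/e. -/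
/-
Given the arrival times `Y`, the activities and coins of distinct elements are independent, so
the probability that `i` is selected factorizes: it is `z i * exp (-Y i * z i)` times, for each
`j ≠ i`, the probability `1 - [Y j < Y i] * z j * exp (-Y j * z j)` that `j` is not selected
before `i`. Integrating out `Y j` gives `1 - ∫₀^{Y i} z j * exp (-t * z j) dt = exp (-Y i * z j)`,
so `i` is selected with probability exactly `z i * ∫₀¹ exp (-y * ∑ j, z j) dy`, which is at least
`z i * ∫₀¹ exp (-y) dy = (1 - 1/e) * z i` because `∑ j, z j ≤ 1`.
-/

open MeasureTheory Set ENNReal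

namespace MeasureTheory

theorem lintegral_pi_prod_eq_prod {ι α : Type*} [Fintype ι] [MeasurableSpace α]
    (μ : ι → Measure α) [∀ j, IsProbabilityMeasure (μ j)] {g : ι → α → ℝ≥0∞}
    (hg : ∀ j, Measurable (g j)) (s : Finset ι) :
    ∫⁻ x, ∏ j ∈ s, g j (x j) ∂Measure.pi μ = ∏ j ∈ s, ∫⁻ t, g j t ∂μ j := by
  rw [ProbabilityTheory.lintegral_prod_eq_prod_lintegral_of_indepFun s _
    (ProbabilityTheory.iIndepFun_pi fun j => (hg j).aemeasurable)
    fun j => (hg j).comp (measurable_pi_apply j)]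
  exact Finset.prod_congr rfl fun j _ => (measurePreserving_eval μ j).lintegral_comp (hg j)

theorem lintegral_pi_eq_lintegral_lintegral_insertNth {n : ℕ} {α : Type*} [MeasurableSpace α]
    (μ : Fin (n + 1) → Measure α) [∀ j, SigmaFinite (μ j)] (i : Fin (n + 1))
    {f : (Fin (n + 1) → α) → ℝ≥0∞} (hf : Measurable f) :
    ∫⁻ x, f x ∂Measure.pi μ =
      ∫⁻ y, ∫⁻ x, f (i.insertNth y x) ∂Measure.pi (fun j => μ (i.succAbove j)) ∂μ i := by
  rw [← ((measurePreserving_piFinSuccAbove μ i).symm).lintegral_comp hf]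
  exact lintegral_prod _ (hf.comp (MeasurableEquiv.measurable _)).aemeasurable

theorem sum_prod_mul_pi_pi {ι κ α : Type*} [Fintype ι] [DecidableEq ι] [Fintype κ]
    [MeasurableSpace α] (μ : ι → Measure α) [∀ j, SigmaFinite (μ j)] (w : ι → κ → ℝ≥0∞)
    (s : ι → κ → Set α) :
    ∑ a : ι → κ, (∏ j, w j (a j)) * Measure.pi μ (univ.pi fun j => s j (a j)) =
      ∏ j, ∑ b, w j b * μ j (s j b) := by
  simp_rw [Measure.pi_pi, ← Finset.prod_mul_distrib]
  exact (Fintype.prod_sum fun j b => w j b * μ j (s j b)).symm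

end MeasureTheory

noncomputable def uniform01 : Measure ℝ := volume.restrict (Icc 0 1)

instance : IsProbabilityMeasure uniform01 := ⟨by simp [uniform01]⟩

theorem ae_mem_Icc_uniform01 : ∀ᵐ t ∂uniform01, t ∈ Icc (0 : ℝ) 1 :=
  ae_restrict_mem measurableSet_Icc

theorem uniform01_Iic {a : ℝ} (ha : a ∈ Icc (0 : ℝ) 1) : uniform01 (Iic a) = .ofReal a := by
  have : Iic a ∩ Icc 0 1 = Icc 0 a := by
    ext t; simp only [mem_inter_iff, mem_Iic, mem_Icc]; grind [ha.2]
  rw [uniform01, Measure.restrict_apply measurableSet_Iic, this, Real.volume_Icc, sub_zero]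

theorem uniform01_Ioi {a : ℝ} (ha : a ∈ Icc (0 : ℝ) 1) : uniform01 (Ioi a) = .ofReal (1 - a) := by
  have : Ioi a ∩ Icc 0 1 = Ioc a 1 := by
    ext t; simp only [mem_inter_iff, mem_Ioi, mem_Icc, mem_Ioc]; grind [ha.1]
  rw [uniform01, Measure.restrict_apply measurableSet_Ioi, this, Real.volume_Ioc]

theorem integral_mul_exp_neg_mul (c y : ℝ) :
    ∫ t in (0 : ℝ)..y, c * Real.exp (-(t * c)) = 1 - Real.exp (-(y * c)) := by
  have hderiv (t : ℝ) : HasDerivAt (fun t => -Real.exp (-(t * c))) (c * Real.exp (-(t * c))) t := by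
    rw [show c * Real.exp (-(t * c)) = -(Real.exp (-(t * c)) * -(1 * c)) by ring]
    exact (((hasDerivAt_id' t).mul_const c).fun_neg.exp).fun_neg
  rw [intervalIntegral.integral_eq_sub_of_hasDerivAt (fun t _ => hderiv t)
    (by apply Continuous.intervalIntegrable; fun_prop)]
  simp only [zero_mul, neg_zero, Real.exp_zero]
  ring

/-- The probability that an element with activation probability `c` and arrival time `t` is not
selected before an element arriving at time `y`. -/
noncomputable def noBlockProb (c y t : ℝ) : ℝ≥0∞ :=
  if t < y then .ofReal (1 - c * Real.exp (-(t * c))) else 1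

@[fun_prop]
theorem Measurable.noBlockProb {α : Type*} [MeasurableSpace α] {f g : α → ℝ} (c : ℝ)
    (hf : Measurable f) (hg : Measurable g) :
    Measurable fun x => noBlockProb c (f x) (g x) :=
  Measurable.ite (measurableSet_lt hg hf) (by fun_prop) measurable_const

theorem noBlockProb_self (c y : ℝ) : noBlockProb c y y = 1 := by
  simp [noBlockProb]

theorem lintegral_noBlockProb {c y : ℝ} (hc : c ∈ Icc (0 : ℝ) 1) (hy : y ∈ Icc (0 : ℝ) 1) :
    ∫⁻ t, noBlockProb c y t ∂uniform01 = .ofReal (Real.exp (-(y * c))) := by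
  set g : ℝ → ℝ := fun t => c * Real.exp (-(t * c))
  have hg : Integrable g uniform01 := (by fun_prop : Continuous g).integrableOn_Icc
  have hg_le_one {t : ℝ} (ht : 0 ≤ t) : g t ≤ 1 := by
    have : Real.exp (-(t * c)) ≤ 1 := Real.exp_le_one_iff.2 (by nlinarith [hc.1])
    nlinarith [Real.exp_pos (-(t * c)), hc.2]
  have hblock : ∫ t, (Iio y).indicator g t ∂uniform01 = 1 - Real.exp (-(y * c)) := by
    have : Iio y ∩ Icc 0 1 = Ico 0 y := by
      ext t; simp only [mem_inter_iff, mem_Iio, mem_Icc, mem_Ico]; grind [hy.2]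
    rw [integral_indicator measurableSet_Iio, uniform01,
      Measure.restrict_restrict measurableSet_Iio, this, integral_Ico_eq_integral_Ioo, ← integral_Ioc_eq_integral_Ioo,
      ← intervalIntegral.integral_of_le hy.1, integral_mul_exp_neg_mul]
  have hnonneg : 0 ≤ᵐ[uniform01] fun t => 1 - (Iio y).indicator g t := by
    filter_upwards [ae_mem_Icc_uniform01] with t ht
    change 0 ≤ 1 - _
    rw [sub_nonneg, indicator]
    split_ifs
    · exact hg_le_one ht.1
    · exact zero_le_one
  have hpt (t : ℝ) : noBlockProb c y t = .ofReal (1 - (Iio y).indicator g t) := by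
    by_cases h : t < y <;> simp [noBlockProb, indicator, h, g]
  have hint : Integrable (fun t => 1 - (Iio y).indicator g t) uniform01 :=
    (integrable_const 1).sub (hg.indicator measurableSet_Iio)
  simp_rw [hpt]
  rw [← ofReal_integral_eq_lintegral_ofReal hint hnonneg, integral_sub (integrable_const 1)
    (hg.indicator measurableSet_Iio), hblock, integral_const, probReal_univ, one_smul,
    _root_.sub_sub_cancel]

theorem ofReal_mul_le_lintegral_mul_exp {c S : ℝ} (hc : 0 ≤ c) (hS : S ≤ 1) :
    .ofReal ((1 - 1 / Real.exp 1) * c) ≤ ∫⁻ y, .ofReal (c * Real.exp (-(y * S))) ∂uniform01 := by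
  have hS1 : ∫⁻ y, .ofReal (c * Real.exp (-(y * 1))) ∂uniform01 =
      .ofReal ((1 - 1 / Real.exp 1) * c) := by
    rw [uniform01, ← ofReal_integral_eq_lintegral_ofReal
      (f := fun y => c * Real.exp (-(y * 1))) (by fun_prop : Continuous _).integrableOn_Icc
      (ae_of_all _ fun y => by positivity), integral_Icc_eq_integral_Ioc,
      ← intervalIntegral.integral_of_le zero_le_one, intervalIntegral.integral_const_mul]
    have h := integral_mul_exp_neg_mul 1 1
    simp only [one_mul] at h
    rw [h, Real.exp_neg, mul_comm, one_div]
  rw [← hS1]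
  refine lintegral_mono_ae ?_
  filter_upwards [ae_mem_Icc_uniform01] with y hy
  gcongr
  nlinarith [hy.1]

def selectionEvent {ι : Type*} (z : ι → ℝ) (A : ι → Bool) (i : ι) :
    Set ((ι → ℝ) × (ι → ℝ)) :=
  {p | A i = true ∧ p.2 i ≤ Real.exp (-(p.1 i * z i)) ∧
    ∀ j, p.1 j < p.1 i → ¬(A j = true ∧ p.2 j ≤ Real.exp (-(p.1 j * z j)))}

section Selection

variable {ι : Type*} {z : ι → ℝ} {i : ι}

theorem measurableSet_selectionEvent [Countable ι] (A : ι → Bool) :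
    MeasurableSet (selectionEvent z A i) := by
  unfold selectionEvent
  measurability

/-- The coin values `u` of element `j` under which `i` can still be selected, given the arrival
times `Y` and the activity `b` of `j`. -/
def coinEvent (z Y : ι → ℝ) (i j : ι) (b : Bool) : Set ℝ :=
  {u | (j = i → b = true ∧ u ≤ Real.exp (-(Y j * z j))) ∧
    (Y j < Y i → ¬(b = true ∧ u ≤ Real.exp (-(Y j * z j))))}

theorem preimage_prodMk_selectionEvent (A : ι → Bool) (Y : ι → ℝ) :
    Prod.mk Y ⁻¹' selectionEvent z A i = univ.pi fun j => coinEvent z Y i j (A j) := by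
  ext U
  simp only [selectionEvent, coinEvent, mem_preimage, mem_ofPred_eq, mem_pi, mem_univ, true_implies,
    forall_and, forall_eq]
  grind

theorem sum_bool_mul_uniform01_coinEvent [DecidableEq ι] {j : ι} (hz : z j ∈ Icc (0 : ℝ) 1)
    {Y : ι → ℝ} (hY : Y j ∈ Icc (0 : ℝ) 1) :
    ∑ b : Bool, .ofReal (if b then z j else 1 - z j) * uniform01 (coinEvent z Y i j b) =
      (if j = i then .ofReal (z j * Real.exp (-(Y j * z j))) else 1) *
        noBlockProb (z j) (Y i) (Y j) := by
  have ha : Real.exp (-(Y j * z j)) ∈ Icc (0 : ℝ) 1 :=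
    ⟨(Real.exp_pos _).le, Real.exp_le_one_iff.2 (neg_nonpos.2 (mul_nonneg hY.1 hz.1))⟩
  rcases eq_or_ne j i with rfl | hji
  · have h_true : coinEvent z Y j j true = Iic (Real.exp (-(Y j * z j))) := by
      ext; simp [coinEvent]
    have h_false : coinEvent z Y j j false = ∅ := by ext; simp [coinEvent]
    simp [h_true, h_false, uniform01_Iic ha, noBlockProb, ofReal_mul hz.1]
  by_cases hlt : Y j < Y i
  · have h_true : coinEvent z Y i j true = Ioi (Real.exp (-(Y j * z j))) := by
      ext; simp [coinEvent, hji, hlt]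
    have h_false : coinEvent z Y i j false = univ := by ext; simp [coinEvent, hji]
    rw [Fintype.sum_bool, h_true, h_false, uniform01_Ioi ha, measure_univ, if_neg hji, one_mul,
      noBlockProb, if_pos hlt, if_pos rfl, if_neg Bool.false_ne_true, mul_one, ← ofReal_mul hz.1,
      ← ofReal_add (mul_nonneg hz.1 (sub_nonneg.2 ha.2)) (sub_nonneg.2 hz.2)]
    congr 1
    ring
  · have h_univ (b : Bool) : coinEvent z Y i j b = univ := by ext; simp [coinEvent, hji, hlt]
    simp [h_univ, hji, hlt, noBlockProb, ← ofReal_add hz.1 (sub_nonneg.2 hz.2)]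

theorem sum_mul_pi_preimage_selectionEvent [Fintype ι] [DecidableEq ι]
    (hz : ∀ j, z j ∈ Icc (0 : ℝ) 1) {Y : ι → ℝ} (hY : ∀ j, Y j ∈ Icc (0 : ℝ) 1) :
    ∑ A : ι → Bool, .ofReal (∏ j, if A j then z j else 1 - z j) *
        Measure.pi (fun _ => uniform01) (Prod.mk Y ⁻¹' selectionEvent z A i) =
      .ofReal (z i * Real.exp (-(Y i * z i))) * ∏ j, noBlockProb (z j) (Y i) (Y j) := by
  simp_rw [preimage_prodMk_selectionEvent,
    ofReal_prod_of_nonneg fun j _ => ite_nonneg (hz j).1 (sub_nonneg.2 (hz j).2)]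
  rw [sum_prod_mul_pi_pi (fun _ => uniform01)
    (fun j b => ENNReal.ofReal (if b = true then z j else 1 - z j)) (coinEvent z Y i)]
  simp_rw [sum_bool_mul_uniform01_coinEvent (hz _) (hY _), Finset.prod_mul_distrib,
    Finset.prod_ite_eq', Finset.mem_univ, if_true]

theorem ae_mem_Icc_pi_uniform01 [Fintype ι] :
    ∀ᵐ Y ∂Measure.pi (fun _ : ι => uniform01), ∀ j, Y j ∈ Icc (0 : ℝ) 1 :=
  ae_all_iff.2 fun _ => Measure.tendsto_eval_ae_ae.eventually ae_mem_Icc_uniform01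

theorem sum_mul_prod_selectionEvent [Fintype ι] [DecidableEq ι]
    (hz : ∀ j, z j ∈ Icc (0 : ℝ) 1) :
    ∑ A : ι → Bool, .ofReal (∏ j, if A j then z j else 1 - z j) *
        (Measure.pi (fun _ => uniform01)).prod (Measure.pi fun _ => uniform01)
          (selectionEvent z A i) =
      ∫⁻ Y, .ofReal (z i * Real.exp (-(Y i * z i))) * ∏ j, noBlockProb (z j) (Y i) (Y j)
        ∂Measure.pi fun _ => uniform01 := by
  have hslice (A : ι → Bool) : Measurable fun Y =>
      Measure.pi (fun _ => uniform01) (Prod.mk Y ⁻¹' selectionEvent z A i) :=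
    measurable_measure_prodMk_left (measurableSet_selectionEvent A)
  simp_rw [Measure.prod_apply (measurableSet_selectionEvent _),
    ← lintegral_const_mul _ (hslice _)]
  rw [← lintegral_finsetSum _ fun A _ => (hslice A).const_mul _]
  exact lintegral_congr_ae (ae_mem_Icc_pi_uniform01.mono fun Y hY =>
    sum_mul_pi_preimage_selectionEvent hz hY)

end Selection

theorem lintegral_selectionProb {n : ℕ} {z : Fin (n + 1) → ℝ} (hz : ∀ j, z j ∈ Icc (0 : ℝ) 1)
    (i : Fin (n + 1)) :
    ∫⁻ Y, .ofReal (z i * Real.exp (-(Y i * z i))) * ∏ j, noBlockProb (z j) (Y i) (Y j)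
        ∂Measure.pi (fun _ => uniform01) =
      ∫⁻ y, .ofReal (z i * Real.exp (-(y * ∑ j, z j))) ∂uniform01 := by
  rw [lintegral_pi_eq_lintegral_lintegral_insertNth _ i (by fun_prop)]
  refine lintegral_congr_ae ?_
  filter_upwards [ae_mem_Icc_uniform01] with y hy
  simp only [Fin.prod_univ_succAbove _ i, Fin.insertNth_apply_same, Fin.insertNth_apply_succAbove,
    noBlockProb_self, one_mul]
  rw [lintegral_const_mul _ (by fun_prop), lintegral_pi_prod_eq_prod _ (fun j => by fun_prop)]
  simp_rw [lintegral_noBlockProb (hz _) hy]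
  rw [← ofReal_prod_of_nonneg fun j _ => (Real.exp_pos _).le,
    ← ofReal_mul (mul_nonneg (hz i).1 (Real.exp_pos _).le), mul_assoc, ← Real.exp_sum,
    ← Real.exp_add, Fin.sum_univ_succAbove _ i, mul_add, Finset.mul_sum, neg_add,
    ← Finset.sum_neg_distrib]

theorem volume_restrict_unitCube_prod {ι : Type*} [Fintype ι] :
    (volume : Measure ((ι → ℝ) × (ι → ℝ))).restrict
        {p | (∀ j, p.1 j ∈ Icc (0 : ℝ) 1) ∧ ∀ j, p.2 j ∈ Icc (0 : ℝ) 1} =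
      (Measure.pi fun _ => uniform01).prod (Measure.pi fun _ => uniform01) := by
  have hcube : {p : (ι → ℝ) × (ι → ℝ) | (∀ j, p.1 j ∈ Icc (0 : ℝ) 1) ∧ ∀ j, p.2 j ∈ Icc (0 : ℝ) 1}
      = (univ.pi fun _ => Icc 0 1) ×ˢ (univ.pi fun _ => Icc 0 1) := by
    ext; simp only [mem_ofPred_eq, mem_prod, mem_pi, mem_univ, true_implies]
  rw [hcube, Measure.volume_eq_prod, ← Measure.prod_restrict, volume_pi, Measure.restrict_pi_pi]
  rfl

/-- (1 - 1/e)-selectability of the Lee–Singla random-order CRS for a rank-one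
matroid.  Each element `j` draws an arrival time `Y j` uniform on `[0,1]` and an independent
uniform coin `U j`; the activeness pattern `A : Fin k → Bool` has `A j = true` with
probability `z j` independently.  Element `i` is selected iff it is active, its coin
satisfies `U i ≤ exp(-Y i · z i)` (acceptance with probability `exp(-Y_i z_i)`), and no
element arriving earlier was active and accepted.  The (unconditional) probability that `i`
is selected is at least `(1 - 1/e) · z i`, i.e. at least `1 - 1/e` conditioned on `i` being
active.  The uniform randomness is modelled by Lebesgue measure on `((Fin k → ℝ) × (Fin k → ℝ))`
restricted to the cube `[0,1]^k × [0,1]^k`, the first coordinate being the arrival times `Y`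
and the second the coins `U`. -/
theorem rcrs_one_minus_inv_e_selectable
    (k : ℕ) (z : Fin k → ℝ)
    (hz : ∀ j, z j ∈ Set.Icc (0 : ℝ) 1) (hsum : ∑ j, z j ≤ 1) (i : Fin k) :
    (1 - 1 / Real.exp 1) * z i ≤
      ∑ A : Fin k → Bool,
        (∏ j, if A j then z j else 1 - z j) *
          ((MeasureTheory.volume.restrict
              {p : (Fin k → ℝ) × (Fin k → ℝ) |
                (∀ j, p.1 j ∈ Set.Icc (0 : ℝ) 1) ∧ ∀ j, p.2 j ∈ Set.Icc (0 : ℝ) 1})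
            {p : (Fin k → ℝ) × (Fin k → ℝ) |
              A i = true ∧ p.2 i ≤ Real.exp (-(p.1 i * z i)) ∧
                ∀ j, p.1 j < p.1 i →
                  ¬(A j = true ∧ p.2 j ≤ Real.exp (-(p.1 j * z j)))}).toReal := by
  obtain ⟨n, rfl⟩ : ∃ n, k = n + 1 := Nat.exists_eq_succ_of_ne_zero i.pos.ne'
  have hw (A : Fin (n + 1) → Bool) : 0 ≤ ∏ j, if A j then z j else 1 - z j :=
    Finset.prod_nonneg fun j _ => ite_nonneg (hz j).1 (sub_nonneg.2 (hz j).2)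
  have hbound := ofReal_mul_le_lintegral_mul_exp (hz i).1 hsum
  rw [← lintegral_selectionProb hz i, ← sum_mul_prod_selectionEvent hz] at hbound
  rw [volume_restrict_unitCube_prod]
  have hfin (A : Fin (n + 1) → Bool) :
      ENNReal.ofReal (∏ j, if A j then z j else 1 - z j) *
        (Measure.pi (fun _ => uniform01)).prod (Measure.pi fun _ => uniform01)
          (selectionEvent z A i) ≠ ⊤ :=
    mul_ne_top ofReal_ne_top (measure_ne_top _ _)
  refine ((ofReal_le_iff_le_toReal (sum_ne_top.2 fun A _ => hfin A)).1 hbound).trans_eq ?_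
  rw [toReal_sum fun A _ => hfin A]
  simp_rw [toReal_mul, toReal_ofReal (hw _)]
  rfl
end

section
/- Suppose for each non-negative integer-indexed family of values y(e') ≥ 0 over a downward-closed family C of distinct-entry tuples over a finite edge set ∂(v), with y(λ) = 1 for the empty tuple λ, and Σ_{e : (e', e) ∈ C} y(e', e) ≤ y(e') for all e' ∈ C. Then there exists a probability distribution D on C such that, for Y ~ D and every nonempty e ∈ C of length k, the probability that the first k characters of Y equal e is exactly y(e). -/
noncomputable def Dfun (E : Type) [Fintype E] [DecidableEq E]
    (C : Finset (List E)) (y : List E → ℝ) (l : List E) : ℝ :=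
  if l ∈ C then
    y l - ∑ e ∈ Finset.univ.filter (fun e => l ++ [e] ∈ C), y (l ++ [e])
  else 0

lemma takeLen_eq {E : Type} {l l' : List E} (h : l'.take l.length = l) (hne : l' ≠ l) :
    l.length < l'.length := by
  rcases lt_or_ge l.length l'.length with h1 | h1
  · exact h1
  · exact absurd ((List.take_of_length_le h1).symm.trans h) hne

lemma partition_lemma (E : Type) [Fintype E] [DecidableEq E]
    (C : Finset (List E)) (l : List E) (hl : l ∈ C) :
    C.filter (fun l' => l'.take l.length = l) =
      insert l ((Finset.univ : Finset E).biUnion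
        (fun e => C.filter (fun l' => l'.take (l.length + 1) = l ++ [e]))) := by
  ext l'
  simp only [Finset.mem_filter, Finset.mem_insert, Finset.mem_biUnion, Finset.mem_univ,
    true_and]
  constructor
  · rintro ⟨hl', htake⟩
    by_cases hne : l' = l
    · exact Or.inl hne
    · have hlen : l.length < l'.length := takeLen_eq htake hne
      refine Or.inr ⟨l'.get ⟨l.length, hlen⟩, hl', ?_⟩
      rw [List.take_succ, htake]
      congr 1
      simp [List.getElem?_eq_getElem hlen]
  · rintro (rfl | ⟨e, hl', htake⟩)
    · exact ⟨hl, by simp⟩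
    · refine ⟨hl', ?_⟩
      have : l'.take l.length = (l'.take (l.length + 1)).take l.length := by
        rw [List.take_take]; congr 1; omega
      rw [this, htake]
      simp

lemma key_lemma (E : Type) [Fintype E] [DecidableEq E]
    (C : Finset (List E))
    (hnodup : ∀ l ∈ C, l.Nodup)
    (hdcSub : ∀ l ∈ C, ∀ l' : List E, l'.Sublist l → l' ∈ C)
    (y : List E → ℝ) :
    ∀ n : ℕ, ∀ l ∈ C, Fintype.card E - l.length ≤ n →
      ∑ l' ∈ C.filter (fun l' => l'.take l.length = l), Dfun E C y l' = y l := by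
  intro n
  induction n with
  | zero =>
    intro l hl hn
    have hlen : Fintype.card E ≤ l.length := by omega
    have hext : ∀ e : E, l ++ [e] ∉ C := by
      intro e he
      have := (hnodup _ he).length_le_card
      simp at this
      omega
    have hset : C.filter (fun l' => l'.take l.length = l) = {l} := by
      ext l'
      simp only [Finset.mem_filter, Finset.mem_singleton]
      constructor
      · rintro ⟨hl', htake⟩
        by_contra hne
        have hlt : l.length < l'.length := takeLen_eq htake hne
        have := (hnodup _ hl').length_le_card
        omega
      · rintro rfl; exact ⟨hl, by simp⟩
    rw [hset, Finset.sum_singleton, Dfun, if_pos hl]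
    have : Finset.univ.filter (fun e => l ++ [e] ∈ C) = ∅ := by
      ext e; simp [hext e]
    rw [this]
    simp
  | succ n ih =>
    intro l hl hn
    rw [partition_lemma E C l hl]
    have hnotmem : l ∉ (Finset.univ : Finset E).biUnion
        (fun e => C.filter (fun l' => l'.take (l.length + 1) = l ++ [e])) := by
      simp only [Finset.mem_biUnion, Finset.mem_univ, Finset.mem_filter, true_and, not_exists]
      rintro e ⟨-, htake⟩
      have h1 : l.take (l.length + 1) = l := List.take_of_length_le (by omega)
      rw [h1] at htake
      have := congrArg List.length htake
      simp at this
    rw [Finset.sum_insert hnotmem]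
    have hdisj : ∀ e ∈ (Finset.univ : Finset E), ∀ e' ∈ (Finset.univ : Finset E), e ≠ e' →
        Disjoint (C.filter (fun l' => l'.take (l.length + 1) = l ++ [e]))
          (C.filter (fun l' => l'.take (l.length + 1) = l ++ [e'])) := by
      intro e _ e' _ hee
      rw [Finset.disjoint_left]
      rintro a ha ha'
      simp only [Finset.mem_filter] at ha ha'
      exact hee (by have := ha.2.symm.trans ha'.2; simpa using this)
    rw [Finset.sum_biUnion hdisj]
    have hinner : ∀ e : E,
        (∑ l' ∈ C.filter (fun l' => l'.take (l.length + 1) = l ++ [e]), Dfun E C y l')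
          = if l ++ [e] ∈ C then y (l ++ [e]) else 0 := by
      intro e
      by_cases he : l ++ [e] ∈ C
      · rw [if_pos he]
        have := ih (l ++ [e]) he (by simp; omega)
        simpa using this
      · rw [if_neg he]
        apply Finset.sum_eq_zero
        intro l' hl'
        simp only [Finset.mem_filter] at hl'
        exact absurd (hdcSub _ hl'.1 _ (hl'.2 ▸ List.take_sublist _ _)) he
    calc Dfun E C y l + ∑ e : E,
          ∑ l' ∈ C.filter (fun l' => l'.take (l.length + 1) = l ++ [e]), Dfun E C y l'
        = Dfun E C y l + ∑ e : E, if l ++ [e] ∈ C then y (l ++ [e]) else 0 := by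
          congr 1; exact Finset.sum_congr rfl (fun e _ => hinner e)
      _ = Dfun E C y l + ∑ e ∈ Finset.univ.filter (fun e => l ++ [e] ∈ C), y (l ++ [e]) := by
          rw [Finset.sum_filter]
      _ = y l := by rw [Dfun, if_pos hl]; ring



/-- VertexRound: given a downward-closed family `C` of distinct-entry tuples
(lists with no duplicates, closed under subsequences and permutations) over a finite edge
set, and prefix masses `y` with `y(λ) = 1` and
`Σ_{e : (e',e) ∈ C} y(e',e) ≤ y(e')` for all `e' ∈ C`, there is a probability
distribution `D` supported on `C` such that for `Y ~ D` and every nonempty `e ∈ C` of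
length `k`, the probability that the first `k` characters of `Y` equal `e` is exactly
`y(e)`. -/
theorem vertexRound_exists_distribution
    (E : Type) [Fintype E] [DecidableEq E] (C : Finset (List E))
    (hnodup : ∀ l ∈ C, l.Nodup)
    (hdcSub : ∀ l ∈ C, ∀ l' : List E, l'.Sublist l → l' ∈ C)
    (hdcPerm : ∀ l ∈ C, ∀ l' : List E, l'.Perm l → l' ∈ C)
    (hempty : ([] : List E) ∈ C)
    (y : List E → ℝ) (hy : ∀ l ∈ C, 0 ≤ y l) (hylam : y [] = 1)
    (hmarg : ∀ l ∈ C,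
      ∑ e ∈ Finset.univ.filter (fun e => l ++ [e] ∈ C), y (l ++ [e]) ≤ y l) :
    ∃ D : List E → ℝ,
      (∀ l, 0 ≤ D l) ∧ (∀ l, l ∉ C → D l = 0) ∧ (∑ l ∈ C, D l = 1) ∧
        ∀ l ∈ C, l ≠ [] →
          ∑ l' ∈ C.filter (fun l' => l'.take l.length = l), D l' = y l := by
  refine ⟨Dfun E C y, ?_, ?_, ?_, ?_⟩
  · intro l
    unfold Dfun
    split
    · next h => linarith [hmarg l h]
    · exact le_refl 0
  · intro l hl; simp [Dfun, hl]
  · have := key_lemma E C hnodup hdcSub y (Fintype.card E) [] hempty (by simp)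
    simpa [hylam] using this
  · intro l hl _
    exact key_lemma E C hnodup hdcSub y (Fintype.card E) l hl (by omega)
end

section
/- Let v be a vertex with incident edge set ∂(v), downward-closed probing constraint C_v, and a distribution (x(e))_{e ∈ C_v} with x(e) ≥ 0 and Σ_{e ∈ C_v} x(e) = 1. Define, for each edge f ∈ ∂(v), the induced edge variable x̃_f := Σ_{e' ∈ C_v : f ∈ e'} g(e'_{<f}) · x(e'), where g(e'_{<f}) is the product of (1 - p_{e}) over the edges of e' strictly preceding f. If VertexProbe samples e' ∈ C_v with probability x(e'), probes its edges in order (each edge f being independently active with probability p_f), and returns the first active edge, then each edge f ∈ ∂(v) is returned with probability exactly p_f · x̃_f. -/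
/-!
VertexProbe returns `f` from the sampled list `l` exactly when `f` is active and every edge of
`l` before `f` is inactive. Since `l` has no repeated edges these are constraints on distinct
coordinates of the state `ω`, so the event is a box in `E → Bool`, and under the product
Bernoulli weights its probability factorises as `p f` times the product of `1 - p e` over the
prefix of `l` before `f`. Averaging over `l` with weights `x l` gives the formula.
-/

theorem List.find?_eq_some_iff_takeWhile {α : Type*} [DecidableEq α] (ω : α → Bool) (f : α)
    (l : List α) :
    l.find? ω = some f ↔ f ∈ l ∧ ω f ∧ ∀ e ∈ l.takeWhile (· ≠ f), ω e = false := by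
  induction l with
  | nil => simp
  | cons a t ih =>
    by_cases ha : a = f
    · subst ha
      cases h : ω a <;> simp [h, ih]
    · cases h : ω a <;> simp [h, ha, Ne.symm ha, ih]

theorem sum_prod_bernoulli_mul_indicator {E R : Type*} [Fintype E] [DecidableEq E] [CommRing R]
    (p : E → R) {T : Finset E} {f : E} (hf : f ∉ T) :
    ∑ ω : E → Bool, (∏ e, if ω e then p e else 1 - p e) *
        (if ω f = true ∧ ∀ e ∈ T, ω e = false then 1 else 0)
      = p f * ∏ e ∈ T, (1 - p e) := by
  set S : E → Finset Bool := fun e => if e = f then {true} else if e ∈ T then {false} else .univ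
  have hevent :
      ({ω : E → Bool | ω f = true ∧ ∀ e ∈ T, ω e = false} : Finset _) = Fintype.piFinset S := by
    ext ω
    simp only [Finset.mem_filter_univ, Fintype.mem_piFinset, S]
    constructor
    · rintro ⟨hωf, hωT⟩ e
      split_ifs with hef heT
      · simp [hef, hωf]
      · simp [hωT e heT]
      · exact Finset.mem_univ _
    · intro h
      refine ⟨by simpa using h f, fun e he => ?_⟩
      have := h e
      rw [if_neg (ne_of_mem_of_not_mem he hf), if_pos he] at this
      simpa using this
  calc _ = ∑ ω ∈ {ω : E → Bool | ω f = true ∧ ∀ e ∈ T, ω e = false},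
          ∏ e, if ω e then p e else 1 - p e := by
        simp only [mul_ite, mul_one, mul_zero, Finset.sum_filter]
    _ = ∏ e, ∑ b ∈ S e, if b then p e else 1 - p e := by
        rw [hevent, Finset.prod_univ_sum]
    _ = ∏ e, (if e = f then p e else 1) * (if e ∈ T then 1 - p e else 1) := by
        refine Finset.prod_congr rfl fun e _ => ?_
        by_cases hef : e = f
        · subst hef; simp [S, hf]
        · by_cases heT : e ∈ T <;> simp [S, hef, heT]
    _ = p f * ∏ e ∈ T, (1 - p e) := by
        rw [Finset.prod_mul_distrib, Finset.prod_ite_eq', Finset.prod_ite_mem, Finset.univ_inter,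
          if_pos (Finset.mem_univ f)]

theorem sum_prod_bernoulli_mul_find?_eq_some {E R : Type*} [Fintype E] [DecidableEq E] [CommRing R]
    (p : E → R) (f : E) {l : List E} (hl : l.Nodup) :
    ∑ ω : E → Bool, (∏ e, if ω e then p e else 1 - p e) *
        (if l.find? ω = some f then 1 else 0)
      = if f ∈ l then p f * ((l.takeWhile (· ≠ f)).map (1 - p ·)).prod else 0 := by
  split_ifs with hf
  · have hfT : f ∉ (l.takeWhile (· ≠ f)).toFinset := by
      intro h
      simpa using List.mem_takeWhile_imp (List.mem_toFinset.1 h)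
    rw [← List.prod_toFinset _ (hl.sublist (List.takeWhile_sublist _)),
      ← sum_prod_bernoulli_mul_indicator p hfT]
    simp only [List.find?_eq_some_iff_takeWhile, hf, true_and, List.mem_toFinset]
  · simp [List.find?_eq_some_iff_takeWhile, hf]

theorem vertexProbe_returns_edge_prob_general
    (E : Type) [Fintype E] [DecidableEq E] (C : Finset (List E))
    (p : E → ℝ)
    (hnodup : ∀ l ∈ C, l.Nodup)
    (x : List E → ℝ)
    (f : E) :
    (∑ l ∈ C, x l *
      ∑ ω : E → Bool,
        (∏ e, if ω e then p e else 1 - p e) *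
          (if l.find? (fun e => ω e) = some f then 1 else 0))
    = p f *
        ∑ l ∈ C.filter (fun l => f ∈ l),
          ((l.takeWhile fun e => e ≠ f).map fun e => 1 - p e).prod * x l := by
  rw [Finset.mul_sum, Finset.sum_filter]
  refine Finset.sum_congr rfl fun l hl => ?_
  rw [sum_prod_bernoulli_mul_find?_eq_some p f (hnodup l hl)]
  split_ifs <;> ring

/-- Lemma 2.1, VertexProbe: sample a tuple `l ∈ C` with probability `x l`,
probe its edges in order (edge `e` independently active with probability `p e`, states
`ω : E → Bool`), and return the first active edge (`l.find? ω`).  Then a fixed edge `f`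
is returned with probability exactly `p f · x̃_f`, where
`x̃_f = Σ_{l ∈ C, f ∈ l} g(l_{<f}) · x l` and `g(l_{<f})` is the product of `(1 - p e)`
over the edges of `l` strictly preceding `f`. -/
theorem vertexProbe_returns_edge_prob
    (E : Type) [Fintype E] [DecidableEq E] (C : Finset (List E))
    (p : E → ℝ) (hp : ∀ e, p e ∈ Set.Icc (0 : ℝ) 1)
    (hnodup : ∀ l ∈ C, l.Nodup)
    (x : List E → ℝ) (hx : ∀ l ∈ C, 0 ≤ x l) (hx1 : ∑ l ∈ C, x l = 1)
    (f : E) :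
    (∑ l ∈ C, x l *
      ∑ ω : E → Bool,
        (∏ e, if ω e then p e else 1 - p e) *
          (if l.find? (fun e => ω e) = some f then 1 else 0))
    = p f *
        ∑ l ∈ C.filter (fun l => f ∈ l),
          ((l.takeWhile fun e => e ≠ f).map fun e => 1 - p e).prod * x l :=
  vertexProbe_returns_edge_prob_general E C p hnodup x f
end

section
/- Let U be a finite set of items with prices α_u ∈ ℝ, weights w_{u,v} ≥ 0, and probabilities p_{u,v} ∈ [0,1] for edges to a fixed vertex v. For a tuple e = (e_1,...,e_k) of distinct edges with e_i = (u_i, v), define utility(e) := Σ_{i=1}^k (w_{e_i} - α_{u_i}) p_{e_i} ∏_{j<i}(1 - p_{e_j}). Let P := {e ∈ ∂(v) : w_e - α_u ≥ 0}. If C_v is downward-closed, then for any e ∈ C_v, removing the edges of e outside P and sorting the remaining edges in non-increasing order of adjusted weight w̃_e = w_e - α_u yields a tuple e'' ∈ C_v with utility(e'') ≥ utility(e). -/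
open scoped Classical

/-- `val(e) = Σ_{i<|e|} g(e_{<i}) · p_{e_i} w_{e_i}` where `g(e_{<i}) = ∏_{j<i}(1-p_{e_j})`;
here applied with adjusted weights `w̃_e = w_e - α_e`, so it is the expected utility. -/
noncomputable def listUtil {E : Type} (p wt : E → ℝ) (l : List E) : ℝ :=
  ∑ i ∈ Finset.range l.length,
    ((l.take i).map fun e => 1 - p e).prod * ((l.map fun e => p e * wt e).getD i 0)

lemma listUtil_nil {E : Type} (p wt : E → ℝ) : listUtil p wt ([] : List E) = 0 := by
  simp [listUtil]

lemma listUtil_cons {E : Type} (p wt : E → ℝ) (e : E) (l : List E) :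
    listUtil p wt (e :: l) = p e * wt e + (1 - p e) * listUtil p wt l := by
  unfold listUtil
  rw [List.length_cons, Finset.sum_range_succ']
  simp [List.take_succ_cons, mul_assoc, ← Finset.mul_sum]
  ring

section Lemmas
variable {E : Type} (p wt : E → ℝ) (hp : ∀ e, p e ∈ Set.Icc (0 : ℝ) 1)

include hp

lemma listUtil_nonneg {l : List E} (h : ∀ e ∈ l, 0 ≤ wt e) : 0 ≤ listUtil p wt l := by
  induction l with
  | nil => simp [listUtil_nil]
  | cons e t ih =>
    rw [listUtil_cons]
    have hpe := hp e
    have := ih (fun e he => h e (List.mem_cons_of_mem _ he))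
    have h1 : 0 ≤ wt e := h e List.mem_cons_self
    have h2 : 0 ≤ 1 - p e := by linarith [hpe.2]
    nlinarith [hpe.1]

lemma listUtil_filter_le (l : List E) :
    listUtil p wt l ≤ listUtil p wt (l.filter fun e => decide (0 ≤ wt e)) := by
  induction l with
  | nil => simp
  | cons e t ih =>
    have hpe := hp e
    have h2 : 0 ≤ 1 - p e := by linarith [hpe.2]
    by_cases h : 0 ≤ wt e
    · rw [List.filter_cons_of_pos (by simpa using h), listUtil_cons, listUtil_cons]
      nlinarith
    · rw [List.filter_cons_of_neg (by simpa using h), listUtil_cons]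
      have hnn : 0 ≤ listUtil p wt (t.filter fun e => decide (0 ≤ wt e)) :=
        listUtil_nonneg p wt hp (by intro e he; simpa using (List.of_mem_filter he))
      push_neg at h
      nlinarith [hpe.1]

lemma listUtil_swap_le {a b : E} (hab : wt a ≤ wt b) (t : List E) :
    listUtil p wt (a :: b :: t) ≤ listUtil p wt (b :: a :: t) := by
  simp only [listUtil_cons]
  nlinarith [mul_nonneg (mul_nonneg (hp a).1 (hp b).1) (sub_nonneg.2 hab)]

lemma listUtil_orderedInsert (e : E) (m : List E) :
    listUtil p wt (e :: m) ≤
      listUtil p wt (m.orderedInsert (fun a b => wt b ≤ wt a) e) := by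
  induction m with
  | nil => simp [List.orderedInsert]
  | cons b t ih =>
    rw [List.orderedInsert]
    split
    · exact le_refl _
    · next h =>
      push_neg at h
      calc listUtil p wt (e :: b :: t) ≤ listUtil p wt (b :: e :: t) :=
            listUtil_swap_le p wt hp (le_of_lt h) t
        _ ≤ _ := by
            rw [listUtil_cons (e := b) (l := e :: t), listUtil_cons (e := b)]
            have h2 : 0 ≤ 1 - p b := by linarith [(hp b).2]
            nlinarith

lemma listUtil_insertionSort (l : List E) :
    listUtil p wt l ≤ listUtil p wt (l.insertionSort (fun a b => wt b ≤ wt a)) := by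
  induction l with
  | nil => simp
  | cons e t ih =>
    rw [List.insertionSort]
    calc listUtil p wt (e :: t) ≤
          listUtil p wt (e :: t.insertionSort (fun a b => wt b ≤ wt a)) := by
            rw [listUtil_cons, listUtil_cons]
            have h2 : 0 ≤ 1 - p e := by linarith [(hp e).2]
            nlinarith
      _ ≤ _ := listUtil_orderedInsert p wt hp e _

end Lemmas


/-- over a downward-closed family `C_v` (closed under subsequences and
permutations), for any tuple `l ∈ C_v`, removing the edges of negative adjusted weight
`w_e - α_e` and sorting the remainder in non-increasing order of adjusted weight yields a
tuple `l'' ∈ C_v` with `utility(l'') ≥ utility(l)`; in particular the maximum of the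
utility over `C_v` is attained at such a tuple. -/
theorem utility_filter_sort_improves
    (E : Type) [Fintype E] [DecidableEq E] (C : Finset (List E))
    (p w α : E → ℝ) (hp : ∀ e, p e ∈ Set.Icc (0 : ℝ) 1) (hw : ∀ e, 0 ≤ w e)
    (hnodup : ∀ l ∈ C, l.Nodup)
    (hdcSub : ∀ l ∈ C, ∀ l' : List E, l'.Sublist l → l' ∈ C)
    (hdcPerm : ∀ l ∈ C, ∀ l' : List E, l'.Perm l → l' ∈ C)
    (l : List E) (hl : l ∈ C) :
    ∃ l'' ∈ C,
      l''.Perm (l.filter fun e => decide (0 ≤ w e - α e)) ∧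
        l''.Pairwise (fun a b => w b - α b ≤ w a - α a) ∧
        listUtil p (fun e => w e - α e) l ≤ listUtil p (fun e => w e - α e) l'' := by
  set wt : E → ℝ := fun e => w e - α e with hwt
  set f := l.filter fun e => decide (0 ≤ wt e) with hf
  set r : E → E → Prop := fun a b => wt b ≤ wt a with hr
  haveI : Std.Total r := ⟨fun a b => le_total (wt b) (wt a)⟩
  haveI : IsTrans E r := ⟨fun a b c hab hbc => le_trans hbc hab⟩
  refine ⟨f.insertionSort r, ?_, List.perm_insertionSort r f, List.pairwise_insertionSort r f, ?_⟩
  · exact hdcPerm f (hdcSub l hl f List.filter_sublist) _ (List.perm_insertionSort r f)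
  · calc listUtil p wt l ≤ listUtil p wt f := listUtil_filter_le p wt hp l
      _ ≤ _ := listUtil_insertionSort p wt hp f
end

section
/- Let G = (U, V, E) be a bipartite stochastic graph with edge probabilities p_e, weights w_e ≥ 0, and downward-closed probing constraints C_v. Given any feasible solution (x_v(e))_{v∈V, e∈C_v} to LP-config — i.e., x_v(e) ≥ 0, Σ_{e∈C_v} x_v(e) = 1 for all v, and Σ_{v∈V} Σ_{e∈C_v : (u,v)∈e} p_{u,v} g(e_{<(u,v)}) x_v(e) ≤ 1 for all u ∈ U — the algorithm that independently runs VertexProbe on each v ∈ V and collects the returned edges produces a (random) edge set N such that: (i) each v ∈ V is incident to at most one edge of N; (ii) for each u ∈ U, the expected number of edges of N incident to u is at most 1; and (iii) E[w(N)] = Σ_{v∈V} Σ_{e∈C_v} val(e) · x_v(e). -/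
/-!
The probability of a joint outcome is a product of independent per-vertex factors (the tuple
sampled for `v` together with the states of the edges at `v`), so the expectation of anything
that depends only on what `v` returns is an expectation over VertexProbe on `v` alone. For a
fixed tuple, conditioning on the state of its first edge gives the recursion `firstActiveExp`,
which evaluates to `val(e)` for the edge weights and to `p_{u,v} g(e_{<(u,v)})` for the indicator
of `u`. Summing over `v`, the expected number of returned edges at `u` is the left-hand side of
the LP constraint for `u`, and the expected weight is the LP objective.
-/

open scoped Classical

/-- `val(e) = Σ_{i<|e|} g(e_{<i}) · p_{e_i} w_{e_i}` where `g(e_{<i}) = ∏_{j<i}(1-p_{e_j})`. -/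
noncomputable def tupleVal {U : Type} (p w : U → ℝ) (l : List U) : ℝ :=
  ∑ i ∈ Finset.range l.length,
    ((l.take i).map fun u => 1 - p u).prod * ((l.map fun u => p u * w u).getD i 0)

section ProductWeights

variable {R ι : Type*} [CommSemiring R] [Fintype ι] [DecidableEq ι] {T : ι → Type*}

lemma prod_apply_update_mul (W : ∀ i, T i → R) (f : ∀ i, T i) (a : ι) (c : T a) :
    (∏ i, W i (Function.update f a c i)) * W a (f a) = W a c * ∏ i, W i (f i) := by
  simp_rw [Function.apply_update W f a c]
  rw [Finset.prod_update_of_mem (Finset.mem_univ a), Fintype.prod_eq_mul_prod_compl a,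
    Finset.compl_eq_univ_sdiff]
  ring

variable [∀ i, Fintype (T i)]

/-- Swapping the `a`-th coordinate of `f` with an independent copy `c` is a measure-preserving
involution of `(∀ i, T i) × T a`; under it `φ (f a) * H f` becomes `φ c * H f`. -/
lemma sum_prod_mul_apply_mul (W : ∀ i, T i → R) (a : ι) (hWa : ∑ c, W a c = 1)
    (φ : T a → R) (H : (∀ i, T i) → R) (hH : ∀ f c, H (Function.update f a c) = H f) :
    ∑ f : ∀ i, T i, (∏ i, W i (f i)) * (φ (f a) * H f)
      = (∑ c, W a c * φ c) * ∑ f : ∀ i, T i, (∏ i, W i (f i)) * H f := by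
  let L : (∀ i, T i) × T a → R := fun q => W a q.2 * ((∏ i, W i (q.1 i)) * (φ (q.1 a) * H q.1))
  have hswap : Function.Involutive fun q : (∀ i, T i) × T a => (Function.update q.1 a q.2, q.1 a) :=
    fun q => by simp
  calc ∑ f : ∀ i, T i, (∏ i, W i (f i)) * (φ (f a) * H f)
      = ∑ q, L q := by
        simp only [L, Fintype.sum_prod_type, ← Finset.sum_mul, hWa, one_mul]
    _ = ∑ q : (∀ i, T i) × T a, L (Function.update q.1 a q.2, q.1 a) :=
        (Equiv.sum_comp hswap.toPerm L).symm
    _ = ∑ q : (∀ i, T i) × T a, W a q.2 * φ q.2 * ((∏ i, W i (q.1 i)) * H q.1) := by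
        refine Fintype.sum_congr _ _ fun q => ?_
        simp only [L, Function.update_self, hH]
        rw [mul_left_comm, ← mul_assoc, prod_apply_update_mul]
        ring
    _ = (∑ c, W a c * φ c) * ∑ f : ∀ i, T i, (∏ i, W i (f i)) * H f := by
        rw [Fintype.sum_prod_type, Finset.sum_comm, Finset.sum_mul_sum]

lemma sum_prod_eq_one (W : ∀ i, T i → R) (hW : ∀ i, ∑ c, W i c = 1) :
    ∑ f : ∀ i, T i, ∏ i, W i (f i) = 1 := by
  rw [← Fintype.prod_sum, Finset.prod_eq_one fun i _ => hW i]

lemma sum_prod_mul_apply (W : ∀ i, T i → R) (hW : ∀ i, ∑ c, W i c = 1) (a : ι) (φ : T a → R) :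
    ∑ f : ∀ i, T i, (∏ i, W i (f i)) * φ (f a) = ∑ c, W a c * φ c := by
  simpa [sum_prod_eq_one W hW] using
    sum_prod_mul_apply_mul W a (hW a) φ (fun _ => 1) fun _ _ => rfl

end ProductWeights

section Bernoulli

variable {R : Type*} [CommRing R]

def bernoulliWeight (q : R) (b : Bool) : R := if b then q else 1 - q

lemma sum_bernoulliWeight (q : R) : ∑ b, bernoulliWeight q b = 1 := by
  simp [bernoulliWeight]

/-- The expected value of `F` at the first active entry of a list whose entries `u` are active
independently with probability `q u` (`none` if no entry is active). -/
noncomputable def firstActiveExp {U : Type*} (q : U → R) (F : Option U → R) : List U → R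
  | [] => F none
  | u :: l => q u * F (some u) + (1 - q u) * firstActiveExp q F l

lemma sum_prod_bernoulliWeight_mul_find? {U : Type*} [Fintype U] [DecidableEq U] (q : U → R)
    (F : Option U → R) {l : List U} (hl : l.Nodup) :
    ∑ s : U → Bool, (∏ u, bernoulliWeight (q u) (s u)) * F (l.find? s) = firstActiveExp q F l := by
  have hW : ∀ u, ∑ b, bernoulliWeight (q u) b = 1 := fun u => sum_bernoulliWeight (q u)
  induction l with
  | nil => simp [firstActiveExp, ← Finset.sum_mul, sum_prod_eq_one _ hW]
  | cons a l ih =>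
    obtain ⟨ha, hl⟩ := List.nodup_cons.mp hl
    have hsplit : ∀ s : U → Bool, F ((a :: l).find? s)
        = (if s a then F (some a) else 0) + (if s a then 0 else 1) * F (l.find? s) := by
      intro s
      cases h : s a <;> simp [h]
    have hrest : ∀ (s : U → Bool) c, l.find? (Function.update s a c) = l.find? s :=
      fun s c => List.find?_congr fun u hu =>
        Function.update_of_ne (ne_of_mem_of_not_mem hu ha) c s
    simp_rw [hsplit, mul_add, Finset.sum_add_distrib]
    rw [sum_prod_mul_apply _ hW a fun c => if c then F (some a) else 0,
      sum_prod_mul_apply_mul _ a (hW a) (fun c : Bool => if c then 0 else 1)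
        (fun s => F (l.find? s)) fun s c => by rw [hrest],
      ih hl]
    simp [firstActiveExp, bernoulliWeight]

lemma firstActiveExp_indicator {U : Type*} [DecidableEq U] (q : U → R) (u : U) {l : List U}
    (hl : l.Nodup) :
    firstActiveExp q (fun o => if o = some u then 1 else 0) l
      = if u ∈ l then q u * ((l.takeWhile fun u' => u' ≠ u).map fun u' => 1 - q u').prod
        else 0 := by
  induction l with
  | nil => simp [firstActiveExp]
  | cons a l ih =>
    obtain ⟨ha, hl⟩ := List.nodup_cons.mp hl
    rw [firstActiveExp, ih hl]
    by_cases hau : a = u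
    · subst hau
      simp [ha]
    · by_cases hul : u ∈ l <;> simp [hau, Ne.symm hau, hul]
      ring

end Bernoulli

lemma tupleVal_cons {U : Type} (q c : U → ℝ) (a : U) (l : List U) :
    tupleVal q c (a :: l) = q a * c a + (1 - q a) * tupleVal q c l := by
  simp only [tupleVal, List.length_cons, Finset.sum_range_succ', List.take_succ_cons,
    List.map_cons, List.prod_cons, List.take_zero, List.map_nil, List.prod_nil,
    List.getD_cons_succ, List.getD_cons_zero, Finset.mul_sum, mul_assoc, one_mul]
  ring

lemma firstActiveExp_elim {U : Type} (q c : U → ℝ) (l : List U) :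
    firstActiveExp q (fun o => o.elim 0 c) l = tupleVal q c l := by
  induction l with
  | nil => simp [firstActiveExp, tupleVal]
  | cons a l ih => simp [firstActiveExp, tupleVal_cons, ih]

section VertexProbe

variable {U V : Type} [Fintype U] [Fintype V] [DecidableEq U] [DecidableEq V]
  {C : V → Finset (List U)}

/-- A joint outcome of VertexProbe on all online vertices: `ω.1 v` is the tuple sampled for `v`,
`ω.2 u v` the state of the edge `(u, v)`. -/
abbrev ProbeOutcome (C : V → Finset (List U)) := (∀ v, {l : List U // l ∈ C v}) × (U → V → Bool)

def ProbeOutcome.prob (x : V → List U → ℝ) (p : U → V → ℝ) (ω : ProbeOutcome C) : ℝ :=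
  (∏ v, x v (ω.1 v).1) * ∏ u, ∏ v, bernoulliWeight (p u v) (ω.2 u v)

def ProbeOutcome.returned (ω : ProbeOutcome C) (v : V) : Option U :=
  (ω.1 v).1.find? fun u => ω.2 u v

/-- Regrouping the outcome vertex by vertex makes its probability a product over `V`. -/
def ProbeOutcome.equivPi (C : V → Finset (List U)) :
    (∀ v, {l : List U // l ∈ C v} × (U → Bool)) ≃ ProbeOutcome C where
  toFun τ := (fun v => (τ v).1, fun u v => (τ v).2 u)
  invFun ω v := (ω.1 v, fun u => ω.2 u v)
  left_inv _ := rfl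
  right_inv _ := rfl

lemma sum_prob_mul_returned (hnodup : ∀ v, ∀ l ∈ C v, l.Nodup) (x : V → List U → ℝ)
    (hx1 : ∀ v, ∑ l ∈ C v, x v l = 1) (p : U → V → ℝ) (v₀ : V) (F : Option U → ℝ) :
    ∑ ω : ProbeOutcome C, ω.prob x p * F (ω.returned v₀)
      = ∑ l ∈ C v₀, x v₀ l * firstActiveExp (fun u => p u v₀) F l := by
  let A : ∀ v, {l : List U // l ∈ C v} × (U → Bool) → ℝ :=
    fun v t => x v t.1 * ∏ u, bernoulliWeight (p u v) (t.2 u)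
  have hA : ∀ v, ∑ t, A v t = 1 := fun v => by
    simp only [A, Fintype.sum_prod_type, ← Finset.sum_mul_sum,
      sum_prod_eq_one _ fun u => sum_bernoulliWeight (p u v), mul_one, Finset.sum_coe_sort, hx1]
  have hprob : ∀ τ, (ProbeOutcome.equivPi C τ).prob x p = ∏ v, A v (τ v) := fun τ => by
    simp only [ProbeOutcome.prob, ProbeOutcome.equivPi, Equiv.coe_fn_mk, A,
      Finset.prod_mul_distrib, Finset.prod_comm (s := Finset.univ (α := U))]
  calc ∑ ω : ProbeOutcome C, ω.prob x p * F (ω.returned v₀)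
      = ∑ τ : ∀ v, {l : List U // l ∈ C v} × (U → Bool),
          (∏ v, A v (τ v)) * F ((τ v₀).1.1.find? (τ v₀).2) := by
        rw [← (ProbeOutcome.equivPi C).sum_comp]
        simp only [hprob]
        rfl
    _ = ∑ t, A v₀ t * F (t.1.1.find? t.2) :=
        sum_prod_mul_apply A hA v₀ fun t => F (t.1.1.find? t.2)
    _ = ∑ l : {l : List U // l ∈ C v₀}, x v₀ l * firstActiveExp (fun u => p u v₀) F l := by
        simp only [A, Fintype.sum_prod_type, mul_assoc, ← Finset.mul_sum]
        refine Fintype.sum_congr _ _ fun l => ?_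
        rw [sum_prod_bernoulliWeight_mul_find? _ _ (hnodup v₀ l l.2)]
    _ = ∑ l ∈ C v₀, x v₀ l * firstActiveExp (fun u => p u v₀) F l :=
        Finset.sum_coe_sort (C v₀) fun l => x v₀ l * firstActiveExp (fun u => p u v₀) F l

lemma sum_prob_mul_card_returned_eq (hnodup : ∀ v, ∀ l ∈ C v, l.Nodup) (x : V → List U → ℝ)
    (hx1 : ∀ v, ∑ l ∈ C v, x v l = 1) (p : U → V → ℝ) (u : U) :
    ∑ ω : ProbeOutcome C,
        ω.prob x p * ((Finset.univ.filter fun v => ω.returned v = some u).card : ℝ)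
      = ∑ v, ∑ l ∈ (C v).filter (fun l => u ∈ l),
          p u v * ((l.takeWhile fun u' => u' ≠ u).map fun u' => 1 - p u' v).prod * x v l := by
  simp only [Finset.natCast_card_filter, Finset.mul_sum]
  rw [Finset.sum_comm]
  refine Fintype.sum_congr _ _ fun v => ?_
  rw [sum_prob_mul_returned hnodup x hx1 p v fun o => if o = some u then 1 else 0,
    Finset.sum_filter]
  refine Finset.sum_congr rfl fun l hl => ?_
  rw [firstActiveExp_indicator _ u (hnodup v l hl)]
  split_ifs <;> ring

lemma sum_prob_mul_weight_returned_eq (hnodup : ∀ v, ∀ l ∈ C v, l.Nodup) (x : V → List U → ℝ)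
    (hx1 : ∀ v, ∑ l ∈ C v, x v l = 1) (p w : U → V → ℝ) :
    ∑ ω : ProbeOutcome C, ω.prob x p * ∑ v, (ω.returned v).elim 0 (fun u => w u v)
      = ∑ v, ∑ l ∈ C v, tupleVal (fun u => p u v) (fun u => w u v) l * x v l := by
  simp only [Finset.mul_sum]
  rw [Finset.sum_comm]
  refine Fintype.sum_congr _ _ fun v => ?_
  rw [sum_prob_mul_returned hnodup x hx1 p v fun o => o.elim 0 fun u => w u v]
  refine Finset.sum_congr rfl fun l _ => ?_
  rw [firstActiveExp_elim, mul_comm]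

end VertexProbe

theorem lp_config_realizable_by_relaxed_probing_general
    (U V : Type) [Fintype U] [Fintype V] [DecidableEq U] [DecidableEq V]
    (p w : U → V → ℝ)
    (C : V → Finset (List U))
    (hnodup : ∀ v, ∀ l ∈ C v, l.Nodup)
    (x : V → List U → ℝ)
    (hx1 : ∀ v, ∑ l ∈ C v, x v l = 1)
    (hmatch : ∀ u : U,
      ∑ v, ∑ l ∈ (C v).filter (fun l => u ∈ l),
        p u v * ((l.takeWhile fun u' => u' ≠ u).map fun u' => 1 - p u' v).prod * x v l
      ≤ 1) :
    -- (i) each online vertex is incident to at most one returned edge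
    (∀ ω : (∀ v : V, {l : List U // l ∈ C v}) × (U → V → Bool), ∀ v : V, ∀ u u' : U,
        ((ω.1 v).1.find? fun u0 => ω.2 u0 v) = some u →
        ((ω.1 v).1.find? fun u0 => ω.2 u0 v) = some u' → u = u') ∧
    -- (ii) each offline vertex is matched at most once in expectation
    (∀ u : U,
      ∑ ω : (∀ v : V, {l : List U // l ∈ C v}) × (U → V → Bool),
        ((∏ v, x v (ω.1 v).1) * ∏ u' : U, ∏ v : V, if ω.2 u' v then p u' v else 1 - p u' v) *
          ((Finset.univ.filter fun v : V =>
            ((ω.1 v).1.find? fun u0 => ω.2 u0 v) = some u).card : ℝ)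
      ≤ 1) ∧
    -- (iii) the expected weight equals the LP-config objective value
    (∑ ω : (∀ v : V, {l : List U // l ∈ C v}) × (U → V → Bool),
        ((∏ v, x v (ω.1 v).1) * ∏ u' : U, ∏ v : V, if ω.2 u' v then p u' v else 1 - p u' v) *
          ∑ v : V, (((ω.1 v).1.find? fun u0 => ω.2 u0 v).elim 0 fun u => w u v)
      = ∑ v : V, ∑ l ∈ C v, tupleVal (fun u => p u v) (fun u => w u v) l * x v l) :=
  ⟨fun _ _ _ _ h h' => Option.some.inj (h.symm.trans h'),
    fun u => (sum_prob_mul_card_returned_eq hnodup x hx1 p u).trans_le (hmatch u),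
    sum_prob_mul_weight_returned_eq hnodup x hx1 p w⟩

/-- `LPOPT(G) ≤ OPT_rel(G)`: given a feasible solution `x` of LP-config,
run VertexProbe independently on every online vertex `v`: sample a tuple `ω.1 v ∈ C_v`
with probability `x v (ω.1 v)` and, with mutually independent edge states
`ω.2 : U → V → Bool` (edge `(u,v)` active with probability `p u v`), return for `v` the
first active edge of its tuple (`ret ω v = (ω.1 v).find? (st · v)`).  The resulting
one-sided matching `N`: (i) contains at most one edge per online vertex; (ii) matches each
offline vertex `u` at most once in expectation; (iii) has expected weight exactly
`Σ_v Σ_{e ∈ C_v} val(e) · x_v(e)`. -/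
theorem lp_config_realizable_by_relaxed_probing
    (U V : Type) [Fintype U] [Fintype V] [DecidableEq U] [DecidableEq V]
    (p w : U → V → ℝ)
    (hp : ∀ u v, p u v ∈ Set.Icc (0 : ℝ) 1) (hw : ∀ u v, 0 ≤ w u v)
    (C : V → Finset (List U))
    (hnodup : ∀ v, ∀ l ∈ C v, l.Nodup)
    (hdcSub : ∀ v, ∀ l ∈ C v, ∀ l' : List U, l'.Sublist l → l' ∈ C v)
    (hdcPerm : ∀ v, ∀ l ∈ C v, ∀ l' : List U, l'.Perm l → l' ∈ C v)
    (x : V → List U → ℝ)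
    (hxnn : ∀ v, ∀ l ∈ C v, 0 ≤ x v l)
    (hx1 : ∀ v, ∑ l ∈ C v, x v l = 1)
    (hmatch : ∀ u : U,
      ∑ v, ∑ l ∈ (C v).filter (fun l => u ∈ l),
        p u v * ((l.takeWhile fun u' => u' ≠ u).map fun u' => 1 - p u' v).prod * x v l
      ≤ 1) :
    -- (i) each online vertex is incident to at most one returned edge
    (∀ ω : (∀ v : V, {l : List U // l ∈ C v}) × (U → V → Bool), ∀ v : V, ∀ u u' : U,
        ((ω.1 v).1.find? fun u0 => ω.2 u0 v) = some u →
        ((ω.1 v).1.find? fun u0 => ω.2 u0 v) = some u' → u = u') ∧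
    -- (ii) each offline vertex is matched at most once in expectation
    (∀ u : U,
      ∑ ω : (∀ v : V, {l : List U // l ∈ C v}) × (U → V → Bool),
        ((∏ v, x v (ω.1 v).1) * ∏ u' : U, ∏ v : V, if ω.2 u' v then p u' v else 1 - p u' v) *
          ((Finset.univ.filter fun v : V =>
            ((ω.1 v).1.find? fun u0 => ω.2 u0 v) = some u).card : ℝ)
      ≤ 1) ∧
    -- (iii) the expected weight equals the LP-config objective value
    (∑ ω : (∀ v : V, {l : List U // l ∈ C v}) × (U → V → Bool),
        ((∏ v, x v (ω.1 v).1) * ∏ u' : U, ∏ v : V, if ω.2 u' v then p u' v else 1 - p u' v) *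
          ∑ v : V, (((ω.1 v).1.find? fun u0 => ω.2 u0 v).elim 0 fun u => w u v)
      = ∑ v : V, ∑ l ∈ C v, tupleVal (fun u => p u v) (fun u => w u v) l * x v l) :=
  lp_config_realizable_by_relaxed_probing_general U V p w C hnodup x hx1 hmatch
end

section
/- Let s, n be positive integers and p ∈ (0, 1/2) with p ≤ 1/√n · o(1) and pn ≤ s. For any 0/1 matrix (x_{u,v})_{u∈[s],v∈[n]} with column sums at most 1, it holds that Σ_{u∈[s]} ∏_{v∈[n]} (1 - p x_{u,v}) ≥ (1 - p²)^n · (s/e). Consequently s - Σ_u ∏_v (1 - p x_{u,v}) ≤ s(1 - (1-p²)^n/e). -/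
/-- for `p ∈ (0, 1/2)` with `p ≤ 1/√n` and `pn ≤ s`, and any 0/1 matrix
`x` with column sums at most `1`,
`Σ_u ∏_v (1 - p x_{u,v}) ≥ (1 - p²)^n · s/e`, and consequently
`s - Σ_u ∏_v (1 - p x_{u,v}) ≤ s(1 - (1-p²)^n/e)`. -/
theorem adaptivity_gap_quantitative
    (s n : ℕ) (hs : 0 < s) (hn : 0 < n) (p : ℝ)
    (hp : p ∈ Set.Ioo (0 : ℝ) (1 / 2)) (hpsqrt : p ≤ 1 / Real.sqrt n)
    (hpn : p * n ≤ s)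
    (x : Fin s → Fin n → ℝ) (hx : ∀ u v, x u v = 0 ∨ x u v = 1)
    (hcol : ∀ v, ∑ u, x u v ≤ 1) :
    (1 - p ^ 2) ^ n * ((s : ℝ) / Real.exp 1) ≤ ∑ u, ∏ v, (1 - p * x u v) ∧
      (s : ℝ) - ∑ u, ∏ v, (1 - p * x u v) ≤ s * (1 - (1 - p ^ 2) ^ n / Real.exp 1) := by
  obtain ⟨hp0, hp2⟩ := hp
  have hp1 : p < 1 := lt_trans hp2 (by norm_num)
  have hq0 : (0:ℝ) < 1 - p ^ 2 := by nlinarith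
  -- pointwise bound
  have key : ∀ u v, (1 - p ^ 2) * Real.exp (-(p * x u v)) ≤ 1 - p * x u v := by
    intro u v
    rcases hx u v with h | h <;> rw [h]
    · simp
      positivity
    · rw [mul_one]
      have h1 : 1 + p ≤ Real.exp p := by
        have := Real.add_one_le_exp p; linarith
      have hE : Real.exp (-p) ≤ (1 + p)⁻¹ := by
        rw [Real.exp_neg]
        exact inv_anti₀ (by linarith) h1
      calc (1 - p ^ 2) * Real.exp (-p) ≤ (1 - p ^ 2) * (1 + p)⁻¹ :=
            mul_le_mul_of_nonneg_left hE hq0.le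
        _ = 1 - p := by field_simp; ring
  -- product bound per row
  have prodkey : ∀ u : Fin s,
      (1 - p ^ 2) ^ n * Real.exp (-(p * ∑ v, x u v)) ≤ ∏ v, (1 - p * x u v) := by
    intro u
    have h1 : ∏ v, ((1 - p ^ 2) * Real.exp (-(p * x u v))) ≤ ∏ v, (1 - p * x u v) := by
      apply Finset.prod_le_prod
      · intro v _
        positivity
      · intro v _
        exact key u v
    calc (1 - p ^ 2) ^ n * Real.exp (-(p * ∑ v, x u v))
        = ∏ v, ((1 - p ^ 2) * Real.exp (-(p * x u v))) := by
          rw [Finset.prod_mul_distrib, Finset.prod_const, ← Real.exp_sum]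
          simp [Finset.card_univ, Finset.mul_sum]
      _ ≤ ∏ v, (1 - p * x u v) := h1
  -- sum of exponentials bound via tangent line at c = p*n/s
  set c : ℝ := p * n / s with hc
  have hs0 : (0:ℝ) < s := by exact_mod_cast hs
  have hc1 : c ≤ 1 := by
    rw [hc, div_le_one hs0]; exact hpn
  have hc0 : 0 ≤ c := by positivity
  have hcs : c * s = p * n := by rw [hc]; field_simp
  have hT : ∑ u, ∑ v, x u v ≤ (n:ℝ) := by
    rw [Finset.sum_comm]
    calc ∑ v : Fin n, ∑ u, x u v ≤ ∑ v : Fin n, (1:ℝ) :=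
          Finset.sum_le_sum (fun v _ => hcol v)
      _ = n := by simp
  have tangent : ∀ u : Fin s,
      Real.exp (-c) * (1 + c - p * ∑ v, x u v) ≤ Real.exp (-(p * ∑ v, x u v)) := by
    intro u
    set t : ℝ := -(p * ∑ v, x u v) with ht
    have h1 : 1 + (t + c) ≤ Real.exp (t + c) := by
      have := Real.add_one_le_exp (t + c); linarith
    have h2 : Real.exp (-c) * Real.exp (t + c) = Real.exp t := by
      rw [← Real.exp_add]; ring_nf
    have h3 : (0:ℝ) < Real.exp (-c) := Real.exp_pos _
    calc Real.exp (-c) * (1 + c - p * ∑ v, x u v)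
        = Real.exp (-c) * (1 + (t + c)) := by rw [show (1:ℝ) + c - p * ∑ v, x u v = 1 + (t + c) by rw [ht]; ring]
      _ ≤ Real.exp (-c) * Real.exp (t + c) := mul_le_mul_of_nonneg_left h1 h3.le
      _ = Real.exp t := h2
  have sumExp : (s:ℝ) * Real.exp (-1) ≤ ∑ u, Real.exp (-(p * ∑ v, x u v)) := by
    have hsum : ∑ u : Fin s, (1 + c - p * ∑ v, x u v)
        = s * (1 + c) - p * ∑ u, ∑ v, x u v := by
      rw [Finset.sum_sub_distrib, Finset.sum_const, ← Finset.mul_sum]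
      simp [Finset.card_univ]
      ring
    have hmid : (s:ℝ) ≤ ∑ u : Fin s, (1 + c - p * ∑ v, x u v) := by
      rw [hsum]
      have : p * ∑ u, ∑ v, x u v ≤ p * n := mul_le_mul_of_nonneg_left hT hp0.le
      nlinarith
    calc (s:ℝ) * Real.exp (-1) ≤ (s:ℝ) * Real.exp (-c) := by
          apply mul_le_mul_of_nonneg_left _ hs0.le
          exact Real.exp_le_exp.2 (by linarith)
      _ ≤ Real.exp (-c) * ∑ u : Fin s, (1 + c - p * ∑ v, x u v) := by
          rw [mul_comm ((s:ℝ)) (Real.exp (-c))]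
          exact mul_le_mul_of_nonneg_left hmid (Real.exp_pos _).le
      _ = ∑ u : Fin s, Real.exp (-c) * (1 + c - p * ∑ v, x u v) := Finset.mul_sum _ _ _
      _ ≤ ∑ u, Real.exp (-(p * ∑ v, x u v)) := Finset.sum_le_sum (fun u _ => tangent u)
  have main : (1 - p ^ 2) ^ n * ((s : ℝ) / Real.exp 1) ≤ ∑ u, ∏ v, (1 - p * x u v) := by
    calc (1 - p ^ 2) ^ n * ((s : ℝ) / Real.exp 1)
        = (1 - p ^ 2) ^ n * ((s:ℝ) * Real.exp (-1)) := by
          rw [Real.exp_neg]; ring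
      _ ≤ (1 - p ^ 2) ^ n * ∑ u, Real.exp (-(p * ∑ v, x u v)) :=
          mul_le_mul_of_nonneg_left sumExp (by positivity)
      _ = ∑ u, (1 - p ^ 2) ^ n * Real.exp (-(p * ∑ v, x u v)) := Finset.mul_sum _ _ _
      _ ≤ ∑ u, ∏ v, (1 - p * x u v) := Finset.sum_le_sum (fun u _ => prodkey u)
  refine ⟨main, ?_⟩
  have h : (s:ℝ) * (1 - (1 - p ^ 2) ^ n / Real.exp 1)
      = s - (1 - p ^ 2) ^ n * ((s:ℝ) / Real.exp 1) := by ring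
  linarith
end
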